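/- Take a_n = 1/(100 n³) and N = 4. Then for every integer m ≥ 1 and every bounded Lipschitz function f : [0,1) → ℂ, the iterated transfer operator satisfies ‖L^m f‖_Lip ≤ (3/4)^m ‖f‖_Lip + 4 ‖f‖_{C⁰}. -/

import Mathlib

open MeasureTheory Set Filter

noncomputable section

namespace Gouezel

/-- `b a n = 4 * ∑_{k=1}^n a_k` (left endpoints of the intervals `I_n`). -/
def b (a : ℕ → ℝ) (n : ℕ) : ℝ := 4 * ∑ k ∈ Finset.range n, a (k + 1)

/-- `b_∞ = 4 * ∑_{n=1}^∞ a_n`. -/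
def binf (a : ℕ → ℝ) : ℝ := 4 * ∑' n : ℕ, a (n + 1)

/-- The length `|J| = 1 - b_∞` of the interval `J = [b_∞, 1)`. -/
def lenJ (a : ℕ → ℝ) : ℝ := 1 - binf a

/-- `v_n'(x) = a_n (1 + 2 cos²(2π n⁴ x))`. -/
def vd (a : ℕ → ℝ) (n : ℕ) (x : ℝ) : ℝ :=
  a n * (1 + 2 * Real.cos (2 * Real.pi * (n : ℝ) ^ 4 * x) ^ 2)

/-- `w_n'(x) = a_n (1 + 2 sin²(2π n⁴ x))`. -/
def wd (a : ℕ → ℝ) (n : ℕ) (x : ℝ) : ℝ :=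
  a n * (1 + 2 * Real.sin (2 * Real.pi * (n : ℝ) ^ 4 * x) ^ 2)

/-- The inverse branch `v_n(x) = b_{n-1} + ∫_0^x v_n'(t) dt`. -/
def v (a : ℕ → ℝ) (n : ℕ) (x : ℝ) : ℝ := b a (n - 1) + ∫ t in (0:ℝ)..x, vd a n t

/-- The inverse branch `w_n(x) = b_{n-1} + 2 a_n + ∫_0^x w_n'(t) dt`. -/
def w (a : ℕ → ℝ) (n : ℕ) (x : ℝ) : ℝ :=
  b a (n - 1) + 2 * a n + ∫ t in (0:ℝ)..x, wd a n t

/-- The affine inverse branches `u_j(x) = b_∞ + (j-1)|J|/N + (|J|/N) x`, `1 ≤ j ≤ N`. -/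
def u (a : ℕ → ℝ) (N : ℕ) (j : ℕ) (x : ℝ) : ℝ :=
  binf a + ((j : ℝ) - 1) * (lenJ a / N) + (lenJ a / N) * x

/-- The transfer operator on complex-valued functions. -/
def L (a : ℕ → ℝ) (N : ℕ) (f : ℝ → ℂ) (x : ℝ) : ℂ :=
  (∑' n : ℕ, ((vd a (n + 1) x : ℂ) * f (v a (n + 1) x)
      + (wd a (n + 1) x : ℂ) * f (w a (n + 1) x)))
    + ((lenJ a / (N : ℝ) : ℝ) : ℂ) * ∑ j ∈ Finset.range N, f (u a N (j + 1) x)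

/-- The transfer operator on real-valued functions. -/
def LR (a : ℕ → ℝ) (N : ℕ) (f : ℝ → ℝ) (x : ℝ) : ℝ :=
  (∑' n : ℕ, (vd a (n + 1) x * f (v a (n + 1) x) + wd a (n + 1) x * f (w a (n + 1) x)))
    + (lenJ a / N) * ∑ j ∈ Finset.range N, f (u a N (j + 1) x)

/-- The part `L_n` of the transfer operator coming from the branches `v_n, w_n`. -/
def Ln (a : ℕ → ℝ) (n : ℕ) (f : ℝ → ℂ) (x : ℝ) : ℂ :=
  (vd a n x : ℂ) * f (v a n x) + (wd a n x : ℂ) * f (w a n x)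

/-- Sup norm of `f` on `[0,1)`. -/
def supNorm (f : ℝ → ℂ) : ℝ := ⨆ x : Ico (0:ℝ) 1, ‖f x.1‖

/-- Best Lipschitz constant of `f` on `[0,1)` (the term at `x = y` is `0/0 = 0`). -/
def lipConst (f : ℝ → ℂ) : ℝ :=
  ⨆ p : Ico (0:ℝ) 1 × Ico (0:ℝ) 1, ‖f p.1.1 - f p.2.1‖ / |p.1.1 - p.2.1|

/-- Lipschitz norm `‖f‖_Lip = sup|f| + Lip(f)` on `[0,1)`. -/
def lipNorm (f : ℝ → ℂ) : ℝ := supNorm f + lipConst f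

/-- `f` is bounded and Lipschitz on `[0,1)`. -/
def BddLip (f : ℝ → ℂ) : Prop :=
  ∃ K : ℝ, (∀ x ∈ Ico (0:ℝ) 1, ‖f x‖ ≤ K) ∧
    ∀ x ∈ Ico (0:ℝ) 1, ∀ y ∈ Ico (0:ℝ) 1, ‖f x - f y‖ ≤ K * |x - y|

/-- The specific choice `a_n = 1/(100 n³)`. -/
def aa (n : ℕ) : ℝ := 1 / (100 * (n : ℝ) ^ 3)

/-- Standing hypotheses on the sequence `(a_n)`: positivity and `∑ a_n < 1/4`. -/
def StdHyp (a : ℕ → ℝ) : Prop :=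
  (∀ n : ℕ, 1 ≤ n → 0 < a n) ∧ Summable (fun n : ℕ => a (n + 1)) ∧
    (∑' n : ℕ, a (n + 1)) < 1 / 4

/-- `T : [0,1) → [0,1)` has the maps `v_n, w_n` (`n ≥ 1`) and `u_j` (`1 ≤ j ≤ N`)
as inverse branches. -/
def InverseBranches (a : ℕ → ℝ) (N : ℕ) (T : ℝ → ℝ) : Prop :=
  MapsTo T (Ico (0:ℝ) 1) (Ico (0:ℝ) 1) ∧
    ∀ x ∈ Ico (0:ℝ) 1,
      (∀ n : ℕ, 1 ≤ n → T (v a n x) = x ∧ T (w a n x) = x) ∧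
      (∀ j : ℕ, 1 ≤ j → j ≤ N → T (u a N j x) = x)

/-!
The weights of `L` are nonnegative and add up to `4 ∑ aₙ + |J| = b_∞ + |J| = 1`, so `L` does not
increase the sup norm. For the Lipschitz constant, substitute `wₙ' = 4aₙ - vₙ'`: the oscillating
weight `vₙ'`, whose Lipschitz constant `4πn⁴aₙ` is large, then only multiplies
`f(vₙ y) - f(wₙ y)`, which is at most `4aₙ Lip(f)` because `vₙ y` and `wₙ y` both lie in
`Iₙ = [b_{n-1}, b_n)`. This bounds the contribution of the `n`-th pair of branches by
`(18 + 16πn⁴)aₙ² Lip(f)`, which for `aₙ = 1/(100n³)` sums to at most `π²/600`, while the affine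
branches `u_j` contribute `|J|²/N ≤ 1/4`. Hence `Lip(Lf) ≤ (3/4) Lip(f)` and
`‖L^m f‖_Lip ≤ ‖f‖_{C⁰} + (3/4)^m Lip(f)`.
-/

section Branches

lemma vd_eq (a : ℕ → ℝ) (n : ℕ) (x : ℝ) :
    vd a n x = a n * (2 + Real.cos (4 * Real.pi * (n : ℝ) ^ 4 * x)) := by
  rw [vd, Real.cos_sq]; ring_nf

lemma vd_add_wd (a : ℕ → ℝ) (n : ℕ) (x : ℝ) : vd a n x + wd a n x = 4 * a n := by
  have := Real.sin_sq_add_cos_sq (2 * Real.pi * (n : ℝ) ^ 4 * x)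
  rw [vd, wd]; linear_combination 2 * a n * this

lemma vd_mem_Icc {a : ℕ → ℝ} {n : ℕ} (ha : 0 ≤ a n) (x : ℝ) : vd a n x ∈ Icc (a n) (3 * a n) := by
  have := Real.cos_sq_le_one (2 * Real.pi * (n : ℝ) ^ 4 * x)
  rw [vd]; constructor <;> nlinarith [sq_nonneg (Real.cos (2 * Real.pi * (n : ℝ) ^ 4 * x))]

lemma wd_mem_Icc {a : ℕ → ℝ} {n : ℕ} (ha : 0 ≤ a n) (x : ℝ) : wd a n x ∈ Icc (a n) (3 * a n) := by
  have hv := vd_mem_Icc ha x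
  have := vd_add_wd a n x
  constructor <;> linarith [hv.1, hv.2]

lemma abs_vd_sub_vd_le {a : ℕ → ℝ} {n : ℕ} (ha : 0 ≤ a n) (x y : ℝ) :
    |vd a n x - vd a n y| ≤ 4 * Real.pi * (n : ℝ) ^ 4 * a n * |x - y| := by
  set c := 4 * Real.pi * (n : ℝ) ^ 4
  have hc : 0 ≤ c := by positivity
  calc |vd a n x - vd a n y| = a n * |Real.cos (c * x) - Real.cos (c * y)| := by
        rw [vd_eq, vd_eq, ← mul_sub, add_sub_add_left_eq_sub, abs_mul, abs_of_nonneg ha]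
    _ ≤ a n * (c * |x - y|) := by
        gcongr
        simpa [← mul_sub, abs_mul, abs_of_nonneg hc] using Real.abs_cos_sub_cos_le (c * x) (c * y)
    _ = c * a n * |x - y| := by ring

lemma integral_vd_zero_one (a : ℕ → ℝ) {n : ℕ} (hn : n ≠ 0) :
    ∫ t in (0 : ℝ)..1, vd a n t = 2 * a n := by
  set c := 4 * Real.pi * (n : ℝ) ^ 4
  have hc : c ≠ 0 := by positivity
  have hsin : Real.sin c = 0 := by
    rw [show c = ((4 * n ^ 4 : ℕ) : ℝ) * Real.pi by push_cast; ring]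
    exact Real.sin_nat_mul_pi _
  have hcos : ∫ t in (0 : ℝ)..1, Real.cos (c * t) = 0 := by
    rw [intervalIntegral.integral_comp_mul_left _ hc, integral_cos]; simp [hsin]
  simp_rw [vd_eq]
  rw [intervalIntegral.integral_const_mul, intervalIntegral.integral_add intervalIntegrable_const
    (by exact (Real.continuous_cos.comp (continuous_const_mul c)).intervalIntegrable _ _)]
  simp only [intervalIntegral.integral_const, sub_zero, smul_eq_mul, one_mul, c, hcos, add_zero]
  ring

lemma continuous_vd (a : ℕ → ℝ) (n : ℕ) : Continuous (vd a n) := by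
  unfold vd; fun_prop

lemma continuous_wd (a : ℕ → ℝ) (n : ℕ) : Continuous (wd a n) := by
  unfold wd; fun_prop

lemma integral_wd_zero_one (a : ℕ → ℝ) {n : ℕ} (hn : n ≠ 0) :
    ∫ t in (0 : ℝ)..1, wd a n t = 2 * a n := by
  have h : ∫ t in (0 : ℝ)..1, (vd a n t + wd a n t) = 4 * a n := by simp [vd_add_wd]
  rw [intervalIntegral.integral_add ((continuous_vd a n).intervalIntegrable (μ := volume) 0 1)
    ((continuous_wd a n).intervalIntegrable 0 1), integral_vd_zero_one a hn] at h
  linarith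

lemma integral_zero_mem_Icc {g : ℝ → ℝ} (hg : Continuous g) (hg0 : ∀ t, 0 ≤ g t) {x : ℝ}
    (hx : x ∈ Icc (0 : ℝ) 1) : ∫ t in (0 : ℝ)..x, g t ∈ Icc 0 (∫ t in (0 : ℝ)..1, g t) :=
  ⟨intervalIntegral.integral_nonneg hx.1 fun t _ => hg0 t,
    intervalIntegral.integral_mono_interval le_rfl hx.1 hx.2
      (Filter.Eventually.of_forall (f := ae (volume.restrict (Ioc 0 1))) hg0)
      (hg.intervalIntegrable (μ := volume) 0 1)⟩

lemma v_sub_v (a : ℕ → ℝ) (n : ℕ) (x y : ℝ) : v a n x - v a n y = ∫ t in y..x, vd a n t := by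
  rw [v, v, add_sub_add_left_eq_sub, intervalIntegral.integral_interval_sub_left
    ((continuous_vd a n).intervalIntegrable 0 x) ((continuous_vd a n).intervalIntegrable 0 y)]

lemma w_sub_w (a : ℕ → ℝ) (n : ℕ) (x y : ℝ) : w a n x - w a n y = ∫ t in y..x, wd a n t := by
  rw [w, w, add_sub_add_left_eq_sub, intervalIntegral.integral_interval_sub_left
    ((continuous_wd a n).intervalIntegrable 0 x) ((continuous_wd a n).intervalIntegrable 0 y)]

lemma abs_v_sub_v_le {a : ℕ → ℝ} {n : ℕ} (ha : 0 ≤ a n) (x y : ℝ) :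
    |v a n x - v a n y| ≤ 3 * a n * |x - y| := by
  rw [v_sub_v, ← Real.norm_eq_abs]
  refine intervalIntegral.norm_integral_le_of_norm_le_const (f := vd a n) fun t _ => ?_
  rw [Real.norm_of_nonneg (ha.trans (vd_mem_Icc ha t).1)]
  exact (vd_mem_Icc ha t).2

lemma abs_w_sub_w_le {a : ℕ → ℝ} {n : ℕ} (ha : 0 ≤ a n) (x y : ℝ) :
    |w a n x - w a n y| ≤ 3 * a n * |x - y| := by
  rw [w_sub_w, ← Real.norm_eq_abs]
  refine intervalIntegral.norm_integral_le_of_norm_le_const (f := wd a n) fun t _ => ?_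
  rw [Real.norm_of_nonneg (ha.trans (wd_mem_Icc ha t).1)]
  exact (wd_mem_Icc ha t).2

lemma b_succ (a : ℕ → ℝ) (n : ℕ) : b a (n + 1) = b a n + 4 * a (n + 1) := by
  rw [b, b, Finset.sum_range_succ]; ring

lemma v_succ_mem_Icc {a : ℕ → ℝ} {n : ℕ} (ha : 0 ≤ a (n + 1)) {x : ℝ} (hx : x ∈ Icc (0 : ℝ) 1) :
    v a (n + 1) x ∈ Icc (b a n) (b a n + 2 * a (n + 1)) := by
  have h := integral_zero_mem_Icc (continuous_vd a (n + 1))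
    (fun t => ha.trans (vd_mem_Icc ha t).1) hx
  rw [integral_vd_zero_one a n.succ_ne_zero] at h
  simp only [v, Nat.add_sub_cancel]
  constructor <;> linarith [h.1, h.2]

lemma w_succ_mem_Icc {a : ℕ → ℝ} {n : ℕ} (ha : 0 ≤ a (n + 1)) {x : ℝ} (hx : x ∈ Icc (0 : ℝ) 1) :
    w a (n + 1) x ∈ Icc (b a n + 2 * a (n + 1)) (b a (n + 1)) := by
  have h := integral_zero_mem_Icc (continuous_wd a (n + 1))
    (fun t => ha.trans (wd_mem_Icc ha t).1) hx
  rw [integral_wd_zero_one a n.succ_ne_zero] at h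
  simp only [w, Nat.add_sub_cancel, b_succ]
  constructor <;> linarith [h.1, h.2]

end Branches

namespace StdHyp

variable {a : ℕ → ℝ}

lemma nonneg (ha : StdHyp a) (n : ℕ) : 0 ≤ a (n + 1) := (ha.1 (n + 1) n.succ_pos).le

lemma b_nonneg (ha : StdHyp a) (n : ℕ) : 0 ≤ b a n := by
  have := Finset.sum_nonneg fun k (_ : k ∈ Finset.range n) => ha.nonneg k
  rw [b]; linarith

lemma b_le_binf (ha : StdHyp a) (n : ℕ) : b a n ≤ binf a := by
  have := ha.2.1.sum_le_tsum (Finset.range n) fun k _ => ha.nonneg k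
  rw [b, binf]; linarith

lemma binf_nonneg (ha : StdHyp a) : 0 ≤ binf a := (ha.b_nonneg 0).trans (ha.b_le_binf 0)

lemma binf_lt_one (ha : StdHyp a) : binf a < 1 := by
  have := ha.2.2
  rw [binf]; linarith

lemma lenJ_pos (ha : StdHyp a) : 0 < lenJ a := sub_pos.2 ha.binf_lt_one

lemma Icc_b_subset (ha : StdHyp a) (n : ℕ) : Icc (b a n) (b a (n + 1)) ⊆ Ico 0 1 := fun _ hz =>
  ⟨(ha.b_nonneg n).trans hz.1, hz.2.trans_lt <| (ha.b_le_binf (n + 1)).trans_lt ha.binf_lt_one⟩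

lemma v_mem_Ico (ha : StdHyp a) (n : ℕ) {x : ℝ} (hx : x ∈ Ico (0:ℝ) 1) :
    v a (n + 1) x ∈ Ico 0 1 := by
  have h := v_succ_mem_Icc (ha.nonneg n) (Ico_subset_Icc_self hx)
  refine ha.Icc_b_subset n ⟨h.1, h.2.trans ?_⟩
  linarith [b_succ a n, ha.nonneg n]

lemma w_mem_Ico (ha : StdHyp a) (n : ℕ) {x : ℝ} (hx : x ∈ Ico (0:ℝ) 1) :
    w a (n + 1) x ∈ Ico 0 1 := by
  have h := w_succ_mem_Icc (ha.nonneg n) (Ico_subset_Icc_self hx)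
  refine ha.Icc_b_subset n ⟨le_trans ?_ h.1, h.2⟩
  linarith [ha.nonneg n]

lemma abs_v_sub_w_le (ha : StdHyp a) (n : ℕ) {x : ℝ} (hx : x ∈ Ico (0:ℝ) 1) :
    |v a (n + 1) x - w a (n + 1) x| ≤ 4 * a (n + 1) := by
  have hv := v_succ_mem_Icc (ha.nonneg n) (Ico_subset_Icc_self hx)
  have hw := w_succ_mem_Icc (ha.nonneg n) (Ico_subset_Icc_self hx)
  rw [abs_le]; constructor <;> linarith [hv.1, hv.2, hw.1, hw.2, b_succ a n]

lemma u_mem_Ico (ha : StdHyp a) {N j : ℕ} (hj : j < N) {x : ℝ} (hx : x ∈ Ico (0:ℝ) 1) :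
    u a N (j + 1) x ∈ Ico 0 1 := by
  have hN : (0 : ℝ) < N := by exact_mod_cast (j.zero_le.trans_lt hj)
  have hjN : (j : ℝ) + 1 ≤ N := by exact_mod_cast hj
  have hJ := ha.lenJ_pos
  have hJN : 0 < lenJ a / N := by positivity
  have key : u a N (j + 1) x = binf a + lenJ a / N * (j + x) := by rw [u]; push_cast; ring
  have hlen : binf a + lenJ a / N * N = 1 := by rw [div_mul_cancel₀ _ hN.ne', lenJ]; ring
  rw [key]
  constructor
  · nlinarith [ha.binf_nonneg, j.cast_nonneg (α := ℝ), hx.1]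
  · nlinarith [hx.2]

end StdHyp

def SupNormLE (f : ℝ → ℂ) (S : ℝ) : Prop := ∀ x ∈ Ico (0:ℝ) 1, ‖f x‖ ≤ S

def LipConstLE (f : ℝ → ℂ) (K : ℝ) : Prop :=
  ∀ x ∈ Ico (0:ℝ) 1, ∀ y ∈ Ico (0:ℝ) 1, ‖f x - f y‖ ≤ K * |x - y|

section Bounds

variable {f : ℝ → ℂ} {S K : ℝ}

instance : Nonempty (Ico (0:ℝ) 1) := ⟨⟨0, by norm_num⟩⟩

lemma supNorm_le (hf : SupNormLE f S) : supNorm f ≤ S :=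
  ciSup_le fun x => hf x.1 x.2

lemma lipConst_nonneg (f : ℝ → ℂ) : 0 ≤ lipConst f :=
  Real.iSup_nonneg fun _ => by positivity

lemma lipConst_le (hK0 : 0 ≤ K) (hf : LipConstLE f K) : lipConst f ≤ K := by
  refine ciSup_le fun p => ?_
  rcases eq_or_ne p.1.1 p.2.1 with h | h
  · simpa [h] using hK0
  · exact (div_le_iff₀ (abs_pos.2 (sub_ne_zero.2 h))).2 (hf _ p.1.2 _ p.2.2)

lemma BddLip.supNormLE (hf : BddLip f) : SupNormLE f (supNorm f) := by
  obtain ⟨C, hC, -⟩ := hf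
  exact fun x hx => le_ciSup (f := fun x : Ico (0:ℝ) 1 => ‖f x.1‖)
    ⟨C, by rintro _ ⟨z, rfl⟩; exact hC z.1 z.2⟩ ⟨x, hx⟩

lemma BddLip.lipConstLE (hf : BddLip f) : LipConstLE f (lipConst f) := by
  obtain ⟨C, hC, hL⟩ := hf
  have hC0 : 0 ≤ C := (norm_nonneg _).trans (hC 0 (by norm_num))
  have hbdd : BddAbove (range fun p : Ico (0:ℝ) 1 × Ico (0:ℝ) 1 =>
      ‖f p.1.1 - f p.2.1‖ / |p.1.1 - p.2.1|) := ⟨C, by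
    rintro _ ⟨p, rfl⟩
    exact div_le_of_le_mul₀ (abs_nonneg _) hC0 (hL _ p.1.2 _ p.2.2)⟩
  intro x hx y hy
  rcases eq_or_ne x y with rfl | h
  · simp
  · exact (div_le_iff₀ (abs_pos.2 (sub_ne_zero.2 h))).1 (le_ciSup hbdd (⟨x, hx⟩, ⟨y, hy⟩))

lemma LipConstLE.mono {K' : ℝ} (hf : LipConstLE f K) (hK : K ≤ K') : LipConstLE f K' :=
  fun x hx y hy => (hf x hx y hy).trans (mul_le_mul_of_nonneg_right hK (abs_nonneg _))

lemma iterate_supNormLE_and_lipConstLE {T : (ℝ → ℂ) → ℝ → ℂ} {q : ℝ} (hq : 0 ≤ q)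
    (hT : ∀ g K, 0 ≤ K → SupNormLE g S → LipConstLE g K →
      SupNormLE (T g) S ∧ LipConstLE (T g) (q * K))
    (hK0 : 0 ≤ K) (hS : SupNormLE f S) (hf : LipConstLE f K) (m : ℕ) :
    SupNormLE (T^[m] f) S ∧ LipConstLE (T^[m] f) (q ^ m * K) := by
  induction m with
  | zero => simpa using ⟨hS, hf⟩
  | succ m ih =>
    rw [Function.iterate_succ_apply', pow_succ', mul_assoc]
    exact hT _ _ (by positivity) ih.1 ih.2

end Bounds

-- `9aₙ²` from each of `vₙ'·(f∘vₙ)` and `wₙ'·(f∘wₙ)`; `16πn⁴aₙ²` from `|vₙ'(x) - vₙ'(y)|` times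
-- `|f(vₙ y) - f(wₙ y)| ≤ 4aₙ Lip(f)`
def lipWeight (a : ℕ → ℝ) (n : ℕ) : ℝ := (18 + 16 * Real.pi * (n : ℝ) ^ 4) * a n ^ 2

def LJ (a : ℕ → ℝ) (N : ℕ) (f : ℝ → ℂ) (x : ℝ) : ℂ :=
  ((lenJ a / (N : ℝ) : ℝ) : ℂ) * ∑ j ∈ Finset.range N, f (u a N (j + 1) x)

lemma L_eq_tsum_Ln_add_LJ (a : ℕ → ℝ) (N : ℕ) (f : ℝ → ℂ) (x : ℝ) :
    L a N f x = ∑' n, Ln a (n + 1) f x + LJ a N f x := rfl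

lemma norm_ofReal_mul_le {r R B : ℝ} {z : ℂ} (hr : |r| ≤ R) (hz : ‖z‖ ≤ B) :
    ‖(r : ℂ) * z‖ ≤ R * B :=
  norm_mul_le_of_le (by rwa [Complex.norm_real, Real.norm_eq_abs]) hz

section Blocks

variable {a : ℕ → ℝ} {N : ℕ} {f : ℝ → ℂ} {S K x y : ℝ}

lemma norm_Ln_le (ha : StdHyp a) (hf : SupNormLE f S) (hx : x ∈ Ico (0:ℝ) 1) (n : ℕ) :
    ‖Ln a (n + 1) f x‖ ≤ 4 * a (n + 1) * S := by
  have hv := vd_mem_Icc (ha.nonneg n) x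
  have hw := wd_mem_Icc (ha.nonneg n) x
  have h1 := norm_ofReal_mul_le (le_of_eq (abs_of_nonneg ((ha.nonneg n).trans hv.1)))
    (hf _ (ha.v_mem_Ico n hx))
  have h2 := norm_ofReal_mul_le (le_of_eq (abs_of_nonneg ((ha.nonneg n).trans hw.1)))
    (hf _ (ha.w_mem_Ico n hx))
  calc ‖Ln a (n + 1) f x‖ ≤ vd a (n + 1) x * S + wd a (n + 1) x * S := (norm_add_le _ _).trans
        (add_le_add h1 h2)
    _ = 4 * a (n + 1) * S := by rw [← add_mul, vd_add_wd]

lemma norm_Ln_sub_Ln_le (ha : StdHyp a) (hK0 : 0 ≤ K) (hf : LipConstLE f K)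
    (hx : x ∈ Ico (0:ℝ) 1) (hy : y ∈ Ico (0:ℝ) 1) (n : ℕ) :
    ‖Ln a (n + 1) f x - Ln a (n + 1) f y‖ ≤ lipWeight a (n + 1) * K * |x - y| := by
  have hA := ha.nonneg n
  have hvx := vd_mem_Icc hA x
  have hwx := wd_mem_Icc hA x
  have decomp : Ln a (n + 1) f x - Ln a (n + 1) f y
      = (vd a (n + 1) x : ℂ) * (f (v a (n + 1) x) - f (v a (n + 1) y))
        + (wd a (n + 1) x : ℂ) * (f (w a (n + 1) x) - f (w a (n + 1) y))
        + ((vd a (n + 1) x - vd a (n + 1) y : ℝ) : ℂ)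
          * (f (v a (n + 1) y) - f (w a (n + 1) y)) := by
    have hx' := vd_add_wd a (n + 1) x
    have hy' := vd_add_wd a (n + 1) y
    rw [← eq_sub_iff_add_eq'] at hx' hy'
    simp only [Ln, hx', hy']; push_cast; ring
  have e1 := norm_ofReal_mul_le (r := vd a (n + 1) x) (R := 3 * a (n + 1))
    (by rw [abs_of_nonneg (hA.trans hvx.1)]; exact hvx.2)
    ((hf _ (ha.v_mem_Ico n hx) _ (ha.v_mem_Ico n hy)).trans
      (mul_le_mul_of_nonneg_left (abs_v_sub_v_le hA x y) hK0))
  have e2 := norm_ofReal_mul_le (r := wd a (n + 1) x) (R := 3 * a (n + 1))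
    (by rw [abs_of_nonneg (hA.trans hwx.1)]; exact hwx.2)
    ((hf _ (ha.w_mem_Ico n hx) _ (ha.w_mem_Ico n hy)).trans
      (mul_le_mul_of_nonneg_left (abs_w_sub_w_le hA x y) hK0))
  have e3 := norm_ofReal_mul_le (abs_vd_sub_vd_le hA x y)
    ((hf _ (ha.v_mem_Ico n hy) _ (ha.w_mem_Ico n hy)).trans
      (mul_le_mul_of_nonneg_left (ha.abs_v_sub_w_le n hy) hK0))
  rw [decomp]
  refine norm_add₃_le.trans ((add_le_add (add_le_add e1 e2) e3).trans_eq ?_)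
  rw [lipWeight]; ring

lemma norm_LJ_le (ha : StdHyp a) (hN : N ≠ 0) (hf : SupNormLE f S) (hx : x ∈ Ico (0:ℝ) 1) :
    ‖LJ a N f x‖ ≤ lenJ a * S := by
  have hJN : |lenJ a / N| = lenJ a / N := abs_of_pos (by have := ha.lenJ_pos; positivity)
  have hsum : ‖∑ j ∈ Finset.range N, f (u a N (j + 1) x)‖ ≤ N * S := by
    refine (norm_sum_le _ _).trans ?_
    simpa using Finset.sum_le_sum fun j hj =>
      hf _ (ha.u_mem_Ico (Finset.mem_range.1 hj) hx)
  refine (norm_ofReal_mul_le hJN.le hsum).trans_eq ?_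
  field_simp

lemma norm_LJ_sub_LJ_le (ha : StdHyp a) (hN : N ≠ 0) (hf : LipConstLE f K)
    (hx : x ∈ Ico (0:ℝ) 1) (hy : y ∈ Ico (0:ℝ) 1) :
    ‖LJ a N f x - LJ a N f y‖ ≤ lenJ a ^ 2 / N * K * |x - y| := by
  have hJN : |lenJ a / N| = lenJ a / N := abs_of_pos (by have := ha.lenJ_pos; positivity)
  have hu : ∀ j, u a N j x - u a N j y = lenJ a / N * (x - y) := fun j => by rw [u, u]; ring
  have hsum : ‖∑ j ∈ Finset.range N, (f (u a N (j + 1) x) - f (u a N (j + 1) y))‖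
      ≤ N * (K * (lenJ a / N * |x - y|)) := by
    refine (norm_sum_le _ _).trans ?_
    simpa [hu, abs_mul, hJN] using Finset.sum_le_sum (s := Finset.range N) fun j hj =>
      hf _ (ha.u_mem_Ico (Finset.mem_range.1 hj) hx) _ (ha.u_mem_Ico (Finset.mem_range.1 hj) hy)
  rw [LJ, LJ, ← mul_sub, ← Finset.sum_sub_distrib]
  refine (norm_ofReal_mul_le hJN.le hsum).trans_eq ?_
  field_simp

end Blocks

section Operator

variable {a : ℕ → ℝ} {N : ℕ} {f : ℝ → ℂ} {S K : ℝ}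

lemma summable_Ln (ha : StdHyp a) (hf : SupNormLE f S) {x : ℝ} (hx : x ∈ Ico (0:ℝ) 1) :
    Summable fun n => Ln a (n + 1) f x :=
  ((ha.2.1.mul_left 4).mul_right S).of_norm_bounded (norm_Ln_le ha hf hx)

lemma supNormLE_L (ha : StdHyp a) (hN : N ≠ 0) (hf : SupNormLE f S) :
    SupNormLE (L a N f) S := by
  intro x hx
  have hseries : ‖∑' n, Ln a (n + 1) f x‖ ≤ binf a * S :=
    tsum_of_norm_bounded ((ha.2.1.hasSum.mul_left 4).mul_right S) (norm_Ln_le ha hf hx)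
  calc ‖L a N f x‖ ≤ binf a * S + lenJ a * S := by
        rw [L_eq_tsum_Ln_add_LJ]
        exact (norm_add_le _ _).trans (add_le_add hseries (norm_LJ_le ha hN hf hx))
    _ = S := by rw [lenJ]; ring

lemma lipConstLE_L (ha : StdHyp a) (hN : N ≠ 0) (hw : Summable fun n => lipWeight a (n + 1))
    (hS : SupNormLE f S) (hK0 : 0 ≤ K) (hf : LipConstLE f K) :
    LipConstLE (L a N f) ((∑' n, lipWeight a (n + 1) + lenJ a ^ 2 / N) * K) := by
  intro x hx y hy
  have hseries : ‖∑' n, (Ln a (n + 1) f x - Ln a (n + 1) f y)‖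
      ≤ (∑' n, lipWeight a (n + 1)) * K * |x - y| :=
    tsum_of_norm_bounded ((hw.hasSum.mul_right K).mul_right |x - y|)
      (norm_Ln_sub_Ln_le ha hK0 hf hx hy)
  rw [L_eq_tsum_Ln_add_LJ, L_eq_tsum_Ln_add_LJ, add_sub_add_comm,
    ← (summable_Ln ha hS hx).tsum_sub (summable_Ln ha hS hy)]
  exact (norm_add_le _ _).trans ((add_le_add hseries (norm_LJ_sub_LJ_le ha hN hf hx hy)).trans_eq
    (by ring))

end Operator

section Specific

lemma hasSum_one_div_succ_sq : HasSum (fun n : ℕ => 1 / ((n : ℝ) + 1) ^ 2) (Real.pi ^ 2 / 6) := by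
  simpa using (hasSum_nat_add_iff' 1).2 hasSum_zeta_two

lemma aa_succ_le (n : ℕ) : aa (n + 1) ≤ 1 / 100 * (1 / ((n : ℝ) + 1) ^ 2) := by
  have h1 : (1 : ℝ) ≤ (n : ℝ) + 1 := by linarith [n.cast_nonneg (α := ℝ)]
  rw [aa, Nat.cast_succ, mul_one_div, div_le_div_iff₀ (by positivity) (by positivity)]
  nlinarith [pow_le_pow_right₀ h1 (show 2 ≤ 3 by norm_num)]

lemma stdHyp_aa : StdHyp aa := by
  have hpos : ∀ n : ℕ, 0 < aa (n + 1) := fun n => by rw [aa]; positivity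
  have hsumm : Summable fun n => aa (n + 1) :=
    (hasSum_one_div_succ_sq.summable.mul_left _).of_nonneg_of_le (fun n => (hpos n).le) aa_succ_le
  refine ⟨fun n hn => ?_, hsumm,
    (hasSum_le aa_succ_le hsumm.hasSum (hasSum_one_div_succ_sq.mul_left (1 / 100))).trans_lt ?_⟩
  · obtain ⟨k, rfl⟩ := Nat.exists_eq_add_of_le' hn
    exact hpos k
  · nlinarith [Real.pi_lt_d2, Real.pi_pos]

lemma lipWeight_aa_succ_le (n : ℕ) : lipWeight aa (n + 1) ≤ 1 / 100 * (1 / ((n : ℝ) + 1) ^ 2) := by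
  set t : ℝ := (n : ℝ) + 1
  have ht : 1 ≤ t := by linarith [n.cast_nonneg (α := ℝ)]
  have ht4 : 1 ≤ t ^ 4 := one_le_pow₀ ht
  have hnum : 18 + 16 * Real.pi * t ^ 4 ≤ 100 * t ^ 4 := by nlinarith [Real.pi_lt_d2]
  rw [lipWeight, aa, Nat.cast_succ]
  calc (18 + 16 * Real.pi * t ^ 4) * (1 / (100 * t ^ 3)) ^ 2
      ≤ 100 * t ^ 4 * (1 / (100 * t ^ 3)) ^ 2 := by gcongr
    _ = 1 / 100 * (1 / t ^ 2) := by field_simp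

lemma L_aa_four_step {S : ℝ} (g : ℝ → ℂ) (K : ℝ) (hK0 : 0 ≤ K) (hS : SupNormLE g S)
    (hK : LipConstLE g K) : SupNormLE (L aa 4 g) S ∧ LipConstLE (L aa 4 g) (3 / 4 * K) := by
  have hw : HasSum (fun n : ℕ => 1 / 100 * (1 / ((n : ℝ) + 1) ^ 2)) (1 / 100 * (Real.pi ^ 2 / 6)) :=
    hasSum_one_div_succ_sq.mul_left _
  have hw_summable : Summable fun n => lipWeight aa (n + 1) :=
    hw.summable.of_nonneg_of_le (fun n => by rw [lipWeight]; positivity) lipWeight_aa_succ_le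
  have hconst : ∑' n, lipWeight aa (n + 1) + lenJ aa ^ 2 / (4 : ℕ) ≤ 3 / 4 := by
    have h1 := hasSum_le lipWeight_aa_succ_le hw_summable.hasSum hw
    have h2 : lenJ aa ≤ 1 := by rw [lenJ]; linarith [stdHyp_aa.binf_nonneg]
    have h3 := stdHyp_aa.lenJ_pos
    push_cast
    nlinarith [Real.pi_lt_d2, Real.pi_pos]
  exact ⟨supNormLE_L stdHyp_aa four_ne_zero hS,
    (lipConstLE_L stdHyp_aa four_ne_zero hw_summable hS hK0 hK).mono
      (mul_le_mul_of_nonneg_right hconst hK0)⟩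

end Specific

theorem stmt12_general (m : ℕ) (f : ℝ → ℂ) (hf : BddLip f) :
    lipNorm ((L aa 4)^[m] f) ≤ (3 / 4 : ℝ) ^ m * lipNorm f + 4 * supNorm f := by
  obtain ⟨hS, hK⟩ := iterate_supNormLE_and_lipConstLE (by norm_num) L_aa_four_step
    (lipConst_nonneg f) hf.supNormLE hf.lipConstLE m
  have hsup := supNorm_le hS
  have hlip := lipConst_le (by have := lipConst_nonneg f; positivity) hK
  have hS0 : 0 ≤ supNorm f := (norm_nonneg _).trans (hf.supNormLE 0 (by norm_num))
  have hpow : 0 ≤ (3 / 4 : ℝ) ^ m * supNorm f := by positivity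
  rw [lipNorm, lipNorm]
  linarith

/-- with `a_n = 1/(100 n³)` and `N = 4`, for every `m ≥ 1`,
`‖L^m f‖_Lip ≤ (3/4)^m ‖f‖_Lip + 4 ‖f‖_{C⁰}`. -/
theorem stmt12 (m : ℕ) (hm : 1 ≤ m) (f : ℝ → ℂ) (hf : BddLip f) :
    lipNorm ((L aa 4)^[m] f) ≤ (3 / 4 : ℝ) ^ m * lipNorm f + 4 * supNorm f :=
  stmt12_general m f hf

end Gouezel
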